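/- arXiv:2604.13526 — 4 statements merged into one kernel-verified Lean document; each statement's English description precedes it below -/
import Mathlib

section
/- Let E', F' ⊆ E_{<i} be such that for all u, w ∈ W_i ∪ S ∪ {v}, u can reach w in (V,E') if and only if u can reach w in (V,F'), where W_i is the set of frontier vertices (vertices incident to both an edge of E_{<i} and an edge of E_{≥i}). Then for every H ⊆ E_{≥i}, v is reachable from S in (V, E'∪H) if and only if v is reachable from S in (V, F'∪H). -/
open scoped Classical
open Finset

noncomputable section

/-- `inc src tgt e x` : edge `e` is incident to vertex `x`. -/
def inc {V : Type*} (src tgt : ℕ → V) (e : ℕ) (x : V) : Prop := src e = x ∨ tgt e = x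

/-- Reachability in the subgraph with edge set `A`. -/
def Reach {V : Type*} (src tgt : ℕ → V) (A : Finset ℕ) (x y : V) : Prop :=
  Relation.ReflTransGen (fun a b => ∃ e ∈ A, src e = a ∧ tgt e = b) x y

/-- `v` is reachable from some vertex of `S` in the subgraph with edge set `A`. -/
def SReach {V : Type*} (src tgt : ℕ → V) (A : Finset ℕ) (S : Finset V) (v : V) : Prop :=
  ∃ s ∈ S, Reach src tgt A s v

/-- Probability that exactly the edges in `X` (among `e_0,…,e_{m-1}`) are present. -/
def prW (p : ℕ → ℝ) (m : ℕ) (X : Finset ℕ) : ℝ :=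
  (∏ e ∈ X, p e) * ∏ e ∈ Finset.range m \ X, (1 - p e)

/-- Probability that `v` is reachable from the seed set `S`. -/
def probReach {V : Type*} (src tgt : ℕ → V) (p : ℕ → ℝ) (m : ℕ) (S : Finset V) (v : V) : ℝ :=
  ∑ X ∈ (Finset.range m).powerset, if SReach src tgt X S v then prW p m X else 0

/-- Conditional probability of `event` given that all edges in `A` are present and
all edges in `B` are absent. -/
def condP (p : ℕ → ℝ) (m : ℕ) (A B : Finset ℕ) (event : Finset ℕ → Prop) : ℝ :=
  (∑ X ∈ (Finset.range m).powerset,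
      if A ⊆ X ∧ X ∩ B = ∅ ∧ event X then prW p m X else 0) /
  (∑ X ∈ (Finset.range m).powerset, if A ⊆ X ∧ X ∩ B = ∅ then prW p m X else 0)

/-- The frontier `W_i`: vertices incident both to an edge of `E_{<i}` and to an edge of
`E_{≥ i}` (as a set). -/
def frontSet {V : Type*} (src tgt : ℕ → V) (m i : ℕ) : Set V :=
  {x | (∃ e ∈ Finset.range i, inc src tgt e x) ∧
       ∃ e ∈ Finset.range m \ Finset.range i, inc src tgt e x}

/-- The frontier `W_i` as a finset. -/
def front {V : Type*} [Fintype V] (src tgt : ℕ → V) (m i : ℕ) : Finset V :=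
  Finset.univ.filter fun x =>
    (∃ e ∈ Finset.range i, inc src tgt e x) ∧
    ∃ e ∈ Finset.range m \ Finset.range i, inc src tgt e x

/-- The shared transversal configuration `Ψ_i(A)`: the set of frontier vertices reachable
from `S`, together with the reachability relation among unreached frontier vertices. -/
def Psi {V : Type*} [Fintype V] (src tgt : ℕ → V) (m : ℕ) (S : Finset V) (i : ℕ)
    (A : Finset ℕ) : Finset V × Finset (V × V) :=
  ((front src tgt m i).filter fun x => SReach src tgt A S x,
   ((front src tgt m i) ×ˢ (front src tgt m i)).filter fun q =>
     ¬ SReach src tgt A S q.1 ∧ Reach src tgt A q.1 q.2)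

/-- The transversal configuration `Φ_i^v(A)`: the sets `W_i^{S⇝}`, `W_i^{⇝v}`, the
reachability matrix on the remaining rows/columns (with extra column `v`), and the
entry `Φ_{S,v}`. -/
def Phi {V : Type*} [Fintype V] (src tgt : ℕ → V) (m : ℕ) (S : Finset V) (i : ℕ) (v : V)
    (A : Finset ℕ) : Finset V × Finset V × Finset (V × V) × Prop :=
  ((front src tgt m i).filter fun x => SReach src tgt A S x,
   (front src tgt m i).filter fun x => Reach src tgt A x v,
   (((front src tgt m i) ∪ {v}) ×ˢ ((front src tgt m i) ∪ {v})).filter fun q =>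
     (q.1 ∈ front src tgt m i ∧ ¬ SReach src tgt A S q.1) ∧
     (q.2 = v ∨ (q.2 ∈ front src tgt m i ∧ ¬ Reach src tgt A q.2 v)) ∧
     Reach src tgt A q.1 q.2,
   SReach src tgt A S v)

/-- Probability that the shared transversal configuration `Ψ` appears at level `i`. -/
def PrPsi {V : Type*} [Fintype V] (src tgt : ℕ → V) (p : ℕ → ℝ) (m : ℕ) (S : Finset V)
    (i : ℕ) (Ψ : Finset V × Finset (V × V)) : ℝ :=
  ∑ A ∈ (Finset.range i).powerset,
    if Psi src tgt m S i A = Ψ then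
      (∏ e ∈ A, p e) * ∏ e ∈ Finset.range i \ A, (1 - p e)
    else 0

/-- `IsWalk src tgt A x y es`: `es` is a directed walk from `x` to `y` using edges in `A`. -/
def IsWalk {V : Type*} (src tgt : ℕ → V) (A : Finset ℕ) : V → V → List ℕ → Prop
  | x, y, [] => x = y
  | x, y, e :: es => e ∈ A ∧ src e = x ∧ IsWalk src tgt A (tgt e) y es

/-! A walk in `E' ∪ H` splits into maximal `E'`-segments joined by `H`-edges. A nontrivial
segment begins and ends at vertices incident to an `E'`-edge, and each of its endpoints is
either an endpoint of the whole walk or incident to an `H`-edge; when `E'` lives below the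
cut and `H` above it, such endpoints are terminals. So each segment can be replaced by an
`F'`-path with the same endpoints. -/

section Transfer

variable {V : Type*} {src tgt : ℕ → V}

theorem Reach.mono {A B : Finset ℕ} (hAB : A ⊆ B) {x y : V} (h : Reach src tgt A x y) :
    Reach src tgt B x y :=
  Relation.ReflTransGen.mono (fun _ _ ⟨e, he, hs, ht⟩ => ⟨e, hAB he, hs, ht⟩) x y h

theorem Reach.inc_left_of_ne {A : Finset ℕ} {x y : V} (h : Reach src tgt A x y) (hxy : x ≠ y) :
    ∃ e ∈ A, inc src tgt e x := by
  obtain ⟨_, ⟨e, he, hs, -⟩, -⟩ := h.cases_head.resolve_left hxy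
  exact ⟨e, he, Or.inl hs⟩

theorem Reach.inc_right_of_ne {A : Finset ℕ} {x y : V} (h : Reach src tgt A x y)
    (hxy : x ≠ y) : ∃ e ∈ A, inc src tgt e y := by
  obtain ⟨_, -, ⟨e, he, -, ht⟩⟩ := h.cases_tail.resolve_left (Ne.symm hxy)
  exact ⟨e, he, Or.inr ht⟩

variable {E' F' H : Finset ℕ} {T : Set V}

theorem Reach.imp_of_terminal_or_inc {u w : V}
    (hT : ∀ x, (∃ e ∈ E', inc src tgt e x) → (∃ e ∈ H, inc src tgt e x) → x ∈ T)
    (hEF : ∀ u ∈ T, ∀ w ∈ T, Reach src tgt E' u w → Reach src tgt F' u w)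
    (hu : u ∈ T ∨ ∃ e ∈ H, inc src tgt e u) (hw : w ∈ T ∨ ∃ e ∈ H, inc src tgt e w)
    (h : Reach src tgt E' u w) : Reach src tgt F' u w := by
  by_cases huw : u = w
  · exact huw ▸ Relation.ReflTransGen.refl
  have hu' : u ∈ T := hu.elim id (hT u (h.inc_left_of_ne huw))
  have hw' : w ∈ T := hw.elim id (hT w (h.inc_right_of_ne huw))
  exact hEF u hu' w hw' h

theorem Reach.union_imp_of_terminals {u w : V}
    (hT : ∀ x, (∃ e ∈ E', inc src tgt e x) → (∃ e ∈ H, inc src tgt e x) → x ∈ T)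
    (hEF : ∀ u ∈ T, ∀ w ∈ T, Reach src tgt E' u w → Reach src tgt F' u w)
    (hu : u ∈ T) (hw : w ∈ T) (h : Reach src tgt (E' ∪ H) u w) :
    Reach src tgt (F' ∪ H) u w := by
  -- `y` is the start of the current `E'`-segment
  have key : ∀ x, Reach src tgt (E' ∪ H) u x →
      ∃ y, (y ∈ T ∨ ∃ e ∈ H, inc src tgt e y) ∧
        Reach src tgt (F' ∪ H) u y ∧ Reach src tgt E' y x := by
    intro x hx
    induction hx with
    | refl => exact ⟨u, Or.inl hu, .refl, .refl⟩
    | @tail x x' _ hstep ih =>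
      obtain ⟨y, hy, huy, hyx⟩ := ih
      obtain ⟨e, he, hs, ht⟩ := hstep
      rcases Finset.mem_union.mp he with heE | heH
      · exact ⟨y, hy, huy, hyx.tail ⟨e, heE, hs, ht⟩⟩
      · have hyx' := (hyx.imp_of_terminal_or_inc hT hEF hy (Or.inr ⟨e, heH, Or.inl hs⟩)).mono
          (Finset.subset_union_left (s₂ := H))
        exact ⟨x', Or.inr ⟨e, heH, Or.inr ht⟩,
          (huy.trans hyx').tail ⟨e, Finset.mem_union_right _ heH, hs, ht⟩, .refl⟩
  obtain ⟨y, hy, huy, hyw⟩ := key w h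
  exact huy.trans
    ((hyw.imp_of_terminal_or_inc hT hEF hy (Or.inl hw)).mono Finset.subset_union_left)

end Transfer

theorem SReach.union_of_reach_imp {V : Type*} {src tgt : ℕ → V} {m i : ℕ} {S : Finset V}
    {v : V} {E' F' H : Finset ℕ} (hE' : E' ⊆ Finset.range i)
    (hH : H ⊆ Finset.range m \ Finset.range i)
    (hEF : ∀ u w : V,
      (u ∈ frontSet src tgt m i ∨ u ∈ S ∨ u = v) →
      (w ∈ frontSet src tgt m i ∨ w ∈ S ∨ w = v) →
      Reach src tgt E' u w → Reach src tgt F' u w)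
    (h : SReach src tgt (E' ∪ H) S v) : SReach src tgt (F' ∪ H) S v := by
  obtain ⟨s, hs, hsv⟩ := h
  refine ⟨s, hs, hsv.union_imp_of_terminals
    (T := {x | x ∈ frontSet src tgt m i ∨ x ∈ S ∨ x = v}) ?_
    (fun u hu w hw => hEF u w hu hw) (Or.inr (Or.inl hs)) (Or.inr (Or.inr rfl))⟩
  rintro x ⟨e, he, hex⟩ ⟨f, hf, hfx⟩
  exact Or.inl ⟨⟨e, hE' he, hex⟩, ⟨f, hH hf, hfx⟩⟩

theorem stmt3_general {V : Type*} (src tgt : ℕ → V) (m i : ℕ)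
    (S : Finset V) (v : V) (E' F' : Finset ℕ)
    (hE' : E' ⊆ Finset.range i) (hF' : F' ⊆ Finset.range i)
    (hequiv : ∀ u w : V,
      (u ∈ frontSet src tgt m i ∨ u ∈ S ∨ u = v) →
      (w ∈ frontSet src tgt m i ∨ w ∈ S ∨ w = v) →
      (Reach src tgt E' u w ↔ Reach src tgt F' u w)) :
    ∀ H ⊆ Finset.range m \ Finset.range i,
      (SReach src tgt (E' ∪ H) S v ↔ SReach src tgt (F' ∪ H) S v) := by
  intro H hH
  exact ⟨SReach.union_of_reach_imp hE' hH fun u w hu hw => (hequiv u w hu hw).mp,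
    SReach.union_of_reach_imp hF' hH fun u w hu hw => (hequiv u w hu hw).mpr⟩

/-- If `E', F' ⊆ E_{<i}` induce the same reachability relation on `W_i ∪ S ∪ {v}`, then
for every `H ⊆ E_{≥i}`, `S ⇝ v` in `(V, E' ∪ H)` iff `S ⇝ v` in `(V, F' ∪ H)`. -/
theorem stmt3 {V : Type*} (src tgt : ℕ → V) (m i : ℕ) (him : i ≤ m)
    (S : Finset V) (v : V) (E' F' : Finset ℕ)
    (hE' : E' ⊆ Finset.range i) (hF' : F' ⊆ Finset.range i)
    (hequiv : ∀ u w : V,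
      (u ∈ frontSet src tgt m i ∨ u ∈ S ∨ u = v) →
      (w ∈ frontSet src tgt m i ∨ w ∈ S ∨ w = v) →
      (Reach src tgt E' u w ↔ Reach src tgt F' u w)) :
    ∀ H ⊆ Finset.range m \ Finset.range i,
      (SReach src tgt (E' ∪ H) S v ↔ SReach src tgt (F' ∪ H) S v) :=
  stmt3_general src tgt m i S v E' F' hE' hF' hequiv

end
end

section
/- (Middle-level equivalence) Let E', F' ⊆ E_{<i} induce identical reachability relations from S and among frontier vertices W_i (i.e., S reaches x in (V,E') iff S reaches x in (V,F') for all x ∈ W_i, and u reaches x in (V,E') iff u reaches x in (V,F') for all u, x ∈ W_i). Let v, w ∈ W_i be vertices not reachable from S in (V,E') such that v reaches w and w reaches v in (V,E'). Then for every H ⊆ E_{≥i}, S reaches v in (V, E'∪H) if and only if S reaches w in (V, F'∪H). -/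
open scoped Classical
open Finset

noncomputable section

lemma reach_mono' {V : Type*} (src tgt : ℕ → V) {A B : Finset ℕ} (h : A ⊆ B) {x y : V} :
    Reach src tgt A x y → Reach src tgt B x y := by
  apply Relation.ReflTransGen.mono
  rintro a b ⟨e, he, h1, h2⟩
  exact ⟨e, h he, h1, h2⟩

lemma main_transfer {V : Type*} (src tgt : ℕ → V) (m i : ℕ)
    (S : Finset V) (v w : V) (E' F' : Finset ℕ)
    (hE' : E' ⊆ Finset.range i)
    (hS : ∀ x ∈ frontSet src tgt m i, SReach src tgt E' S x → SReach src tgt F' S x)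
    (hM : ∀ u ∈ frontSet src tgt m i, ∀ x ∈ frontSet src tgt m i,
      Reach src tgt E' u x → Reach src tgt F' u x)
    (hvW : v ∈ frontSet src tgt m i) (hwW : w ∈ frontSet src tgt m i)
    (hvNS : ¬ SReach src tgt E' S v)
    (hvw : Reach src tgt E' v w)
    (H : Finset ℕ) (hH : H ⊆ Finset.range m \ Finset.range i) :
    SReach src tgt (E' ∪ H) S v → SReach src tgt (F' ∪ H) S w := by
  rintro ⟨s, hs, hreach⟩
  have key : ∀ x : V, Reach src tgt (E' ∪ H) s x →
      ∃ y, Reach src tgt E' y x ∧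
        (y ∈ S ∨ (SReach src tgt (F' ∪ H) S y ∧
          (y ∈ frontSet src tgt m i ∨ (y = x ∧ ∃ e ∈ H, tgt e = y)))) := by
    intro x hx
    induction hx with
    | refl => exact ⟨s, Relation.ReflTransGen.refl, Or.inl hs⟩
    | @tail b c hab hedge ih =>
      obtain ⟨e, he, hsrc, htgt⟩ := hedge
      obtain ⟨y, hy, hcase⟩ := ih
      rcases Finset.mem_union.1 he with heE | heH
      · -- step along an old edge
        have hstep : Reach src tgt E' b c :=
          Relation.ReflTransGen.single ⟨e, heE, hsrc, htgt⟩
        rcases hcase with hyS | ⟨hQy, hW⟩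
        · exact ⟨y, hy.trans hstep, Or.inl hyS⟩
        · rcases hW with hyW | ⟨heq, e', he'H, htgt'⟩
          · exact ⟨y, hy.trans hstep, Or.inr ⟨hQy, Or.inl hyW⟩⟩
          · -- y = b is the target of an H edge and source of an E' edge, so y ∈ W
            have hbW : b ∈ frontSet src tgt m i :=
              ⟨⟨e, hE' heE, Or.inl hsrc⟩, ⟨e', hH he'H, Or.inr (heq ▸ htgt')⟩⟩
            exact ⟨b, hstep, Or.inr ⟨heq ▸ hQy, Or.inl hbW⟩⟩
      · -- step along a new edge e ∈ H
        have hQb : SReach src tgt (F' ∪ H) S b := by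
          rcases Relation.ReflTransGen.cases_tail hy with heq | ⟨d, hyd, hdb⟩
          · -- trivial path: y = b
            rcases hcase with hyS | ⟨hQy, _⟩
            · exact ⟨y, hyS, heq ▸ Relation.ReflTransGen.refl⟩
            · exact heq.symm ▸ hQy
          · -- nontrivial path ends with an E' edge into b, so b ∈ W
            obtain ⟨e', he'E, hsrc', htgt'⟩ := hdb
            have hbW : b ∈ frontSet src tgt m i :=
              ⟨⟨e', hE' he'E, Or.inr htgt'⟩, ⟨e, hH heH, Or.inl hsrc⟩⟩
            rcases hcase with hyS | ⟨hQy, hW⟩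
            · have : SReach src tgt F' S b := hS b hbW ⟨y, hyS, hy⟩
              obtain ⟨s', hs', r⟩ := this
              exact ⟨s', hs', reach_mono' src tgt Finset.subset_union_left r⟩
            · rcases hW with hyW | ⟨heq, _⟩
              · have hr : Reach src tgt F' y b := hM y hyW b hbW hy
                obtain ⟨s', hs', r⟩ := hQy
                exact ⟨s', hs',
                  r.trans (reach_mono' src tgt Finset.subset_union_left hr)⟩
              · exact heq ▸ hQy
        obtain ⟨s', hs', r⟩ := hQb
        refine ⟨c, Relation.ReflTransGen.refl,
          Or.inr ⟨⟨s', hs', r.tail ⟨e, Finset.mem_union_right _ heH, hsrc, htgt⟩⟩,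
            Or.inr ⟨rfl, e, heH, htgt⟩⟩⟩
  obtain ⟨y, hy, hcase⟩ := key v hreach
  rcases hcase with hyS | ⟨hQy, hW⟩
  · exact absurd ⟨y, hyS, hy⟩ hvNS
  · have hyW : y ∈ frontSet src tgt m i := by
      rcases hW with hyW | ⟨heq, _⟩
      · exact hyW
      · exact heq ▸ hvW
    have hr : Reach src tgt F' y w := hM y hyW w hwW (hy.trans hvw)
    obtain ⟨s', hs', r⟩ := hQy
    exact ⟨s', hs', r.trans (reach_mono' src tgt Finset.subset_union_left hr)⟩

/-- Middle-level equivalence: if `E', F' ⊆ E_{<i}` induce identical reachability from `S`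
and among the frontier `W_i`, and `v, w ∈ W_i` are unreached from `S` in `(V,E')` but
mutually reachable in `(V,E')`, then for every `H ⊆ E_{≥i}`,
`S ⇝ v` in `(V, E' ∪ H)` iff `S ⇝ w` in `(V, F' ∪ H)`. -/
theorem stmt5 {V : Type*} (src tgt : ℕ → V) (m i : ℕ) (him : i ≤ m)
    (S : Finset V) (v w : V) (E' F' : Finset ℕ)
    (hE' : E' ⊆ Finset.range i) (hF' : F' ⊆ Finset.range i)
    (hS : ∀ x ∈ frontSet src tgt m i,
      (SReach src tgt E' S x ↔ SReach src tgt F' S x))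
    (hM : ∀ u ∈ frontSet src tgt m i, ∀ x ∈ frontSet src tgt m i,
      (Reach src tgt E' u x ↔ Reach src tgt F' u x))
    (hvW : v ∈ frontSet src tgt m i) (hwW : w ∈ frontSet src tgt m i)
    (hvNS : ¬ SReach src tgt E' S v) (hwNS : ¬ SReach src tgt E' S w)
    (hvw : Reach src tgt E' v w) (hwv : Reach src tgt E' w v) :
    ∀ H ⊆ Finset.range m \ Finset.range i,
      (SReach src tgt (E' ∪ H) S v ↔ SReach src tgt (F' ∪ H) S w) := by
  intro H hH
  constructor
  · exact main_transfer src tgt m i S v w E' F' hE'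
      (fun x hx => (hS x hx).1) (fun u hu x hx => (hM u hu x hx).1)
      hvW hwW hvNS hvw H hH
  · have hwNS' : ¬ SReach src tgt F' S w := fun h => hwNS ((hS w hwW).2 h)
    have hwv' : Reach src tgt F' w v := (hM w hwW v hvW).1 hwv
    exact main_transfer src tgt m i S w v F' E' hF'
      (fun x hx => (hS x hx).2) (fun u hu x hx => (hM u hu x hx).2)
      hwW hvW hwNS' hwv' H hH

end
end

section
/- For i such that v ∈ W_i (v is a frontier vertex) and v ∉ S, the probability Pr[S⇝v] decomposes as Σ_{Ψ∈M_i} Pr[Ψ] · q(Ψ), where M_i is the set of realizable shared transversal configurations at level i, Pr[Ψ] is the probability of Ψ appearing, and q(Ψ) = 1 if v is reachable from S under Ψ, and otherwise q(Ψ) = Pr[S⇝v | Ψ], which depends only on the strongly connected component of v in the graph G_i(Ψ) induced by Ψ on W_i. -/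
open scoped Classical
open Finset

noncomputable section

def prL (p : ℕ → ℝ) (i : ℕ) (A : Finset ℕ) : ℝ :=
  (∏ e ∈ A, p e) * ∏ e ∈ Finset.range i \ A, (1 - p e)

def prH (p : ℕ → ℝ) (m i : ℕ) (U : Finset ℕ) : ℝ :=
  (∏ e ∈ U, p e) * ∏ e ∈ (Finset.range m \ Finset.range i) \ U, (1 - p e)

lemma sum_prH (p : ℕ → ℝ) (m i : ℕ) :
    ∑ U ∈ (Finset.range m \ Finset.range i).powerset, prH p m i U = 1 := by
  have h := Finset.prod_add p (fun e => 1 - p e) (Finset.range m \ Finset.range i)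
  simp only [add_sub_cancel, Finset.prod_const_one] at h
  simp only [prH]
  exact h.symm

lemma prL_ne (p : ℕ → ℝ) (m i : ℕ) (him : i ≤ m)
    (hp : ∀ e ∈ Finset.range m, 0 < p e ∧ p e < 1) {A : Finset ℕ}
    (hA : A ⊆ Finset.range i) : prL p i A ≠ 0 := by
  have hsub : Finset.range i ⊆ Finset.range m := Finset.range_subset_range.2 him
  have h1 : (0:ℝ) < ∏ e ∈ A, p e :=
    Finset.prod_pos fun e he => (hp e (hsub (hA he))).1
  have h2 : (0:ℝ) < ∏ e ∈ Finset.range i \ A, (1 - p e) :=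
    Finset.prod_pos fun e he =>
      sub_pos.2 (hp e (hsub (Finset.mem_sdiff.1 he).1)).2
  exact ne_of_gt (mul_pos h1 h2)

lemma prW_split (p : ℕ → ℝ) (m i : ℕ) (him : i ≤ m) {A U : Finset ℕ}
    (hA : A ⊆ Finset.range i) (hU : U ⊆ Finset.range m \ Finset.range i) :
    prW p m (A ∪ U) = prL p i A * prH p m i U := by
  have hAi : ∀ e ∈ A, e < i := fun e he => Finset.mem_range.1 (hA he)
  have hUm : ∀ e ∈ U, e < m ∧ ¬ e < i := fun e he => by
    have := hU he; simp only [Finset.mem_sdiff, Finset.mem_range] at this; exact this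
  have hdisj : Disjoint A U := Finset.disjoint_left.2 fun e heA heU =>
    (hUm e heU).2 (hAi e heA)
  have hsplit : Finset.range m \ (A ∪ U) =
      (Finset.range i \ A) ∪ ((Finset.range m \ Finset.range i) \ U) := by
    ext e
    simp only [Finset.mem_sdiff, Finset.mem_union, Finset.mem_range]
    constructor
    · rintro ⟨hm, hnot⟩
      push_neg at hnot
      by_cases hei : e < i
      · exact Or.inl ⟨hei, hnot.1⟩
      · exact Or.inr ⟨⟨hm, hei⟩, hnot.2⟩
    · rintro (⟨hei, hna⟩ | ⟨⟨hm, hni⟩, hnu⟩)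
      · exact ⟨lt_of_lt_of_le hei him, fun h => h.elim hna (fun hu => (hUm e hu).2 hei)⟩
      · exact ⟨hm, fun h => h.elim (fun ha => hni (hAi e ha)) hnu⟩
  have hdisj2 : Disjoint (Finset.range i \ A) ((Finset.range m \ Finset.range i) \ U) :=
    Finset.disjoint_left.2 fun e he1 he2 => by
      have h1 := (Finset.mem_sdiff.1 he1).1
      have h2 := (Finset.mem_sdiff.1 (Finset.mem_sdiff.1 he2).1).2
      exact h2 h1
  rw [prW, Finset.prod_union hdisj, hsplit, Finset.prod_union hdisj2, prL, prH]
  ring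

lemma cond_iff {i : ℕ} {A X : Finset ℕ} (hA : A ⊆ Finset.range i) :
    (A ⊆ X ∧ X ∩ (Finset.range i \ A) = ∅) ↔ X ∩ Finset.range i = A := by
  constructor
  · rintro ⟨h1, h2⟩
    ext e
    simp only [Finset.mem_inter]
    constructor
    · rintro ⟨hx, hi⟩
      by_contra hna
      have : e ∈ X ∩ (Finset.range i \ A) := by
        simp only [Finset.mem_inter, Finset.mem_sdiff]; exact ⟨hx, hi, hna⟩
      rw [h2] at this; exact absurd this (Finset.notMem_empty e)
    · intro ha; exact ⟨h1 ha, hA ha⟩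
  · intro h
    constructor
    · intro e he; rw [← h] at he; exact (Finset.mem_inter.1 he).1
    · ext e
      simp only [Finset.mem_inter, Finset.mem_sdiff, Finset.notMem_empty, iff_false]
      rintro ⟨hx, hi, hna⟩
      exact hna (by rw [← h]; exact Finset.mem_inter.2 ⟨hx, hi⟩)

lemma reindex (m i : ℕ) (him : i ≤ m) {A : Finset ℕ} (hA : A ⊆ Finset.range i)
    (G : Finset ℕ → ℝ) :
    ∑ X ∈ (Finset.range m).powerset, (if X ∩ Finset.range i = A then G X else 0)
      = ∑ U ∈ (Finset.range m \ Finset.range i).powerset, G (A ∪ U) := by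
  have hXeq : ∀ X : Finset ℕ, X ∩ Finset.range i = A →
      A ∪ (X \ Finset.range i) = X := by
    intro X hX
    ext e
    simp only [Finset.mem_union, Finset.mem_sdiff]
    constructor
    · rintro (he | ⟨he, _⟩)
      · rw [← hX] at he; exact (Finset.mem_inter.1 he).1
      · exact he
    · intro he
      by_cases hi : e ∈ Finset.range i
      · exact Or.inl (by rw [← hX]; exact Finset.mem_inter.2 ⟨he, hi⟩)
      · exact Or.inr ⟨he, hi⟩
  have hUeq : ∀ U : Finset ℕ, U ⊆ Finset.range m \ Finset.range i →
      (A ∪ U) \ Finset.range i = U := by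
    intro U hU
    ext e
    simp only [Finset.mem_sdiff, Finset.mem_union]
    constructor
    · rintro ⟨he | he, hi⟩
      · exact absurd (hA he) hi
      · exact he
    · intro he
      have h2 := hU he
      simp only [Finset.mem_sdiff] at h2
      exact ⟨Or.inr he, h2.2⟩
  rw [← Finset.sum_filter]
  refine Finset.sum_nbij' (i := fun X => X \ Finset.range i) (j := fun U => A ∪ U)
    ?_ ?_ ?_ ?_ ?_
  · intro X hX
    simp only [Finset.mem_filter, Finset.mem_powerset] at hX
    simp only [Finset.mem_powerset]
    exact Finset.sdiff_subset_sdiff hX.1 (le_refl _)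
  · intro U hU
    simp only [Finset.mem_powerset] at hU
    simp only [Finset.mem_filter, Finset.mem_powerset]
    have hsub : Finset.range i ⊆ Finset.range m := Finset.range_subset_range.2 him
    refine ⟨Finset.union_subset (hA.trans hsub) (hU.trans Finset.sdiff_subset), ?_⟩
    ext e
    simp only [Finset.mem_inter, Finset.mem_union]
    constructor
    · rintro ⟨he | he, hi⟩
      · exact he
      · have h2 := hU he
        simp only [Finset.mem_sdiff] at h2
        exact absurd hi h2.2
    · intro he; exact ⟨Or.inl he, hA he⟩
  · intro X hX
    simp only [Finset.mem_filter, Finset.mem_powerset] at hX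
    exact hXeq X hX.2
  · intro U hU
    simp only [Finset.mem_powerset] at hU
    exact hUeq U hU
  · intro X hX
    simp only [Finset.mem_filter, Finset.mem_powerset] at hX
    rw [hXeq X hX.2]

lemma condP_eq (p : ℕ → ℝ) (m i : ℕ) (him : i ≤ m)
    (hp : ∀ e ∈ Finset.range m, 0 < p e ∧ p e < 1) {A : Finset ℕ}
    (hA : A ⊆ Finset.range i) (ev : Finset ℕ → Prop) :
    condP p m A (Finset.range i \ A) ev
      = ∑ U ∈ (Finset.range m \ Finset.range i).powerset,
          if ev (A ∪ U) then prH p m i U else 0 := by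
  have hden : (∑ X ∈ (Finset.range m).powerset,
      if A ⊆ X ∧ X ∩ (Finset.range i \ A) = ∅ then prW p m X else 0) = prL p i A := by
    have h1 : ∀ X ∈ (Finset.range m).powerset,
        (if A ⊆ X ∧ X ∩ (Finset.range i \ A) = ∅ then prW p m X else 0)
          = (if X ∩ Finset.range i = A then prW p m X else 0) := by
      intro X _; rw [if_congr (cond_iff hA) rfl rfl]
    rw [Finset.sum_congr rfl h1, reindex m i him hA]
    have h2 : ∀ U ∈ (Finset.range m \ Finset.range i).powerset,
        prW p m (A ∪ U) = prL p i A * prH p m i U := by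
      intro U hU; exact prW_split p m i him hA (Finset.mem_powerset.1 hU)
    rw [Finset.sum_congr rfl h2, ← Finset.mul_sum, sum_prH, mul_one]
  have hnum : (∑ X ∈ (Finset.range m).powerset,
      if A ⊆ X ∧ X ∩ (Finset.range i \ A) = ∅ ∧ ev X then prW p m X else 0)
      = prL p i A * ∑ U ∈ (Finset.range m \ Finset.range i).powerset,
          if ev (A ∪ U) then prH p m i U else 0 := by
    have h1 : ∀ X ∈ (Finset.range m).powerset,
        (if A ⊆ X ∧ X ∩ (Finset.range i \ A) = ∅ ∧ ev X then prW p m X else 0)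
          = (if X ∩ Finset.range i = A then (if ev X then prW p m X else 0) else 0) := by
      intro X _
      by_cases h : X ∩ Finset.range i = A
      · rw [if_pos h]
        by_cases hev : ev X
        · rw [if_pos ⟨((cond_iff hA).2 h).1, ((cond_iff hA).2 h).2, hev⟩, if_pos hev]
        · rw [if_neg (fun hh => hev hh.2.2), if_neg hev]
      · rw [if_neg h, if_neg (fun hh => h ((cond_iff hA).1 ⟨hh.1, hh.2.1⟩))]
    rw [Finset.sum_congr rfl h1, reindex m i him hA, Finset.mul_sum]
    refine Finset.sum_congr rfl fun U hU => ?_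
    by_cases hev : ev (A ∪ U)
    · rw [if_pos hev, if_pos hev, prW_split p m i him hA (Finset.mem_powerset.1 hU)]
    · rw [if_neg hev, if_neg hev, mul_zero]
  rw [condP, hnum, hden, mul_div_cancel_left₀ _ (prL_ne p m i him hp hA)]

-- auxiliary development

lemma Reach_mono {V : Type*} (src tgt : ℕ → V) {A B : Finset ℕ} (h : A ⊆ B) {x y : V}
    (hr : Reach src tgt A x y) : Reach src tgt B x y := by
  induction hr with
  | refl => exact Relation.ReflTransGen.refl
  | tail _ step ih =>
      obtain ⟨e, he, h1, h2⟩ := step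
      exact ih.tail ⟨e, h he, h1, h2⟩

def rrel {V : Type*} (src tgt : ℕ → V) (Ψ : Finset V × Finset (V × V)) (U : Finset ℕ)
    (a b : V) : Prop :=
  (∃ e ∈ U, src e = a ∧ tgt e = b) ∨ (a, b) ∈ Ψ.2

def QQ {V : Type*} (src tgt : ℕ → V) (S : Finset V) (Ψ : Finset V × Finset (V × V))
    (U : Finset ℕ) (x : V) : Prop :=
  ∃ w, (w ∈ S ∨ w ∈ Ψ.1) ∧ Relation.ReflTransGen (rrel src tgt Ψ U) w x

lemma key {V : Type*} [Fintype V] (src tgt : ℕ → V) (m : ℕ) (S : Finset V) (i : ℕ)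
    {A U : Finset ℕ} (hA : A ⊆ Finset.range i) (hU : U ⊆ Finset.range m \ Finset.range i)
    {x : V} (hx : x ∈ front src tgt m i) :
    SReach src tgt (A ∪ U) S x ↔ QQ src tgt S (Psi src tgt m S i A) U x := by
  set Ψ := Psi src tgt m S i A with hΨdef
  have hΨ1 : ∀ y : V, y ∈ Ψ.1 ↔ y ∈ front src tgt m i ∧ SReach src tgt A S y := by
    intro y; simp [hΨdef, Psi]
  have hΨ2 : ∀ a b : V, (a, b) ∈ Ψ.2 ↔
      (a ∈ front src tgt m i ∧ b ∈ front src tgt m i) ∧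
      ¬ SReach src tgt A S a ∧ Reach src tgt A a b := by
    intro a b; simp [hΨdef, Psi, Finset.mem_product, and_assoc]
  have Ψ1front : ∀ y : V, y ∈ Ψ.1 → y ∈ front src tgt m i := fun y h => ((hΨ1 y).1 h).1
  -- conversion: a QQ-vertex w (in S ∪ front) that low-reaches a frontier vertex y gives QQ y
  have conv : ∀ w y : V, (w ∈ S ∨ w ∈ front src tgt m i) →
      QQ src tgt S Ψ U w → Reach src tgt A w y → y ∈ front src tgt m i →
      QQ src tgt S Ψ U y := by
    intro w y hw hq hr hy
    by_cases hsw : SReach src tgt A S w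
    · obtain ⟨s, hs, hsr⟩ := hsw
      exact ⟨y, Or.inr ((hΨ1 y).2 ⟨hy, ⟨s, hs, hsr.trans hr⟩⟩), Relation.ReflTransGen.refl⟩
    · have hwf : w ∈ front src tgt m i := by
        rcases hw with hw | hw
        · exact absurd ⟨w, hw, Relation.ReflTransGen.refl⟩ hsw
        · exact hw
      obtain ⟨w0, h0, hpath⟩ := hq
      exact ⟨w0, h0, hpath.tail (Or.inr ((hΨ2 w y).2 ⟨⟨hwf, hy⟩, hsw, hr⟩))⟩
  -- a QQ-vertex with an outgoing low edge is in S ∪ front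
  have qfront : ∀ y : V, QQ src tgt S Ψ U y → (∃ e ∈ A, src e = y) →
      y ∈ S ∨ y ∈ front src tgt m i := by
    intro y hq hlow
    obtain ⟨e, heA, hesrc⟩ := hlow
    have hlowinc : ∃ e ∈ Finset.range i, inc src tgt e y := ⟨e, hA heA, Or.inl hesrc⟩
    obtain ⟨w0, h0, hpath⟩ := hq
    rcases hpath.cases_tail with heq | ⟨b, _, hstep⟩
    · subst heq
      rcases h0 with h0 | h0
      · exact Or.inl h0
      · exact Or.inr (Ψ1front _ h0)
    · rcases hstep with ⟨e', he'U, _, he'tgt⟩ | hmem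
      · refine Or.inr ?_
        simp only [front, Finset.mem_filter, Finset.mem_univ, true_and]
        exact ⟨hlowinc, ⟨e', hU he'U, Or.inr he'tgt⟩⟩
      · exact Or.inr ((hΨ2 b y).1 hmem).1.2
  constructor
  · rintro ⟨s, hs, hre⟩
    -- invariant along the walk
    have main : ∀ y : V, Reach src tgt (A ∪ U) s y →
        QQ src tgt S Ψ U y ∨
        ∃ w, QQ src tgt S Ψ U w ∧ (w ∈ S ∨ w ∈ front src tgt m i) ∧ Reach src tgt A w y := by
      intro y hre
      induction hre with
      | refl => exact Or.inl ⟨s, Or.inl hs, Relation.ReflTransGen.refl⟩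
      | @tail b c _ step ih =>
          obtain ⟨e, heAU, hesrc, hetgt⟩ := step
          rcases Finset.mem_union.1 heAU with heA | heU
          · -- low edge
            rcases ih with hq | ⟨w, hq, hw, hr⟩
            · have hbs := qfront b hq ⟨e, heA, hesrc⟩
              exact Or.inr ⟨b, hq, hbs,
                Relation.ReflTransGen.single ⟨e, heA, hesrc, hetgt⟩⟩
            · exact Or.inr ⟨w, hq, hw, hr.tail ⟨e, heA, hesrc, hetgt⟩⟩
          · -- high edge
            have hstep : rrel src tgt Ψ U b c := Or.inl ⟨e, heU, hesrc, hetgt⟩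
            rcases ih with hq | ⟨w, hq, hw, hr⟩
            · obtain ⟨w0, h0, hpath⟩ := hq
              exact Or.inl ⟨w0, h0, hpath.tail hstep⟩
            · rcases hr.cases_tail with heq | ⟨b', _, hstep'⟩
              · subst heq
                obtain ⟨w0, h0, hpath⟩ := hq
                exact Or.inl ⟨w0, h0, hpath.tail hstep⟩
              · have hbf : b ∈ front src tgt m i := by
                  obtain ⟨e', he'A, _, he'tgt⟩ := hstep'
                  simp only [front, Finset.mem_filter, Finset.mem_univ, true_and]
                  exact ⟨⟨e', hA he'A, Or.inr he'tgt⟩, ⟨e, hU heU, Or.inl hesrc⟩⟩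
                have hqb := conv w b hw hq hr hbf
                obtain ⟨w0, h0, hpath⟩ := hqb
                exact Or.inl ⟨w0, h0, hpath.tail hstep⟩
    rcases main x hre with hq | ⟨w, hq, hw, hr⟩
    · exact hq
    · exact conv w x hw hq hr hx
  · rintro ⟨w, hw, hpath⟩
    have hlift : ∀ y z : V, Relation.ReflTransGen (rrel src tgt Ψ U) y z →
        Reach src tgt (A ∪ U) y z := by
      intro y z h
      induction h with
      | refl => exact Relation.ReflTransGen.refl
      | tail _ step ih =>
          rcases step with ⟨e, heU, h1, h2⟩ | hmem
          · exact ih.tail ⟨e, Finset.mem_union_right _ heU, h1, h2⟩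
          · have := ((hΨ2 _ _).1 hmem).2.2
            exact ih.trans (Reach_mono src tgt Finset.subset_union_left this)
    have hwx : Reach src tgt (A ∪ U) w x := hlift w x hpath
    rcases hw with hw | hw
    · exact ⟨w, hw, hwx⟩
    · obtain ⟨_, ⟨s, hs, hsr⟩⟩ := (hΨ1 w).1 hw
      exact ⟨s, hs, (Reach_mono src tgt Finset.subset_union_left hsr).trans hwx⟩


/-- Decomposition of `Pr[S ⇝ v]` over shared transversal configurations at a level `i`
with `v ∈ W_i`: there is a function `q` with `q Ψ x = 1` when `x` is reachable from `S`
under `Ψ`, `q Ψ x` equal to the conditional reachability probability otherwise (in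
particular well-defined), invariant on strongly connected components of `G_i(Ψ)`, such
that `Pr[S ⇝ v] = Σ_Ψ Pr[Ψ] · q Ψ v`. -/
theorem stmt11 {V : Type*} [Fintype V] (src tgt : ℕ → V) (p : ℕ → ℝ) (m : ℕ)
    (hp : ∀ e ∈ Finset.range m, 0 < p e ∧ p e < 1)
    (S : Finset V) (i : ℕ) (him : i ≤ m) (v : V)
    (hv : v ∈ front src tgt m i) (hvS : v ∉ S) :
    ∃ q : Finset V × Finset (V × V) → V → ℝ,
      (∀ A ⊆ Finset.range i, ∀ x ∈ front src tgt m i,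
        (SReach src tgt A S x → q (Psi src tgt m S i A) x = 1) ∧
        (¬ SReach src tgt A S x → q (Psi src tgt m S i A) x =
          condP p m A (Finset.range i \ A) (fun X => SReach src tgt X S x))) ∧
      (∀ Ψ ∈ (Finset.range i).powerset.image (Psi src tgt m S i), ∀ x y : V,
        (x, y) ∈ Ψ.2 → (y, x) ∈ Ψ.2 → q Ψ x = q Ψ y) ∧
      probReach src tgt p m S v
        = ∑ Ψ ∈ (Finset.range i).powerset.image (Psi src tgt m S i),
            PrPsi src tgt p m S i Ψ * q Ψ v := by
  classical
  refine ⟨fun Ψ x => ∑ U ∈ (Finset.range m \ Finset.range i).powerset,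
      if QQ src tgt S Ψ U x then prH p m i U else 0, ?_, ?_, ?_⟩
  · intro A hA x hx
    dsimp only
    constructor
    · intro hsx
      have hall : ∀ U ∈ (Finset.range m \ Finset.range i).powerset,
          (if QQ src tgt S (Psi src tgt m S i A) U x then prH p m i U else 0)
            = prH p m i U := by
        intro U hU
        rw [if_pos ⟨x, Or.inr (by simp [Psi, hx, hsx]), Relation.ReflTransGen.refl⟩]
      rw [Finset.sum_congr rfl hall, sum_prH]
    · intro hnsx
      rw [condP_eq p m i him hp hA]
      refine Finset.sum_congr rfl fun U hU => ?_
      rw [if_congr (key src tgt m S i hA (Finset.mem_powerset.1 hU) hx).symm rfl rfl]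
  · intro Ψ _ x y hxy hyx
    dsimp only
    refine Finset.sum_congr rfl fun U hU => ?_
    refine if_congr ⟨?_, ?_⟩ rfl rfl
    · rintro ⟨w, hw, hpw⟩; exact ⟨w, hw, hpw.tail (Or.inr hxy)⟩
    · rintro ⟨w, hw, hpw⟩; exact ⟨w, hw, hpw.tail (Or.inr hyx)⟩
  · dsimp only
    have hstep1 : probReach src tgt p m S v
        = ∑ A ∈ (Finset.range i).powerset, prL p i A *
            ∑ U ∈ (Finset.range m \ Finset.range i).powerset,
              if QQ src tgt S (Psi src tgt m S i A) U v then prH p m i U else 0 := by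
      rw [probReach]
      have h1 : ∀ X ∈ (Finset.range m).powerset,
          (if SReach src tgt X S v then prW p m X else 0)
            = ∑ A ∈ (Finset.range i).powerset,
                if X ∩ Finset.range i = A then
                  (if SReach src tgt X S v then prW p m X else 0) else 0 := by
        intro X hX
        rw [Finset.sum_ite_eq,
          if_pos (Finset.mem_powerset.2 Finset.inter_subset_right)]
      rw [Finset.sum_congr rfl h1, Finset.sum_comm]
      refine Finset.sum_congr rfl fun A hA => ?_
      have hA' := Finset.mem_powerset.1 hA
      rw [reindex m i him hA', Finset.mul_sum]
      refine Finset.sum_congr rfl fun U hU => ?_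
      have hU' := Finset.mem_powerset.1 hU
      rw [if_congr (key src tgt m S i hA' hU' hv) rfl rfl,
        prW_split p m i him hA' hU']
      by_cases h : QQ src tgt S (Psi src tgt m S i A) U v
      · rw [if_pos h, if_pos h]
      · rw [if_neg h, if_neg h, mul_zero]
    rw [hstep1]
    have h2 : ∀ A ∈ (Finset.range i).powerset,
        (prL p i A *
          ∑ U ∈ (Finset.range m \ Finset.range i).powerset,
            if QQ src tgt S (Psi src tgt m S i A) U v then prH p m i U else 0)
        = ∑ Ψ ∈ (Finset.range i).powerset.image (Psi src tgt m S i),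
            if Psi src tgt m S i A = Ψ then
              prL p i A *
                ∑ U ∈ (Finset.range m \ Finset.range i).powerset,
                  if QQ src tgt S Ψ U v then prH p m i U else 0
            else 0 := by
      intro A hA
      rw [Finset.sum_ite_eq, if_pos (Finset.mem_image_of_mem _ hA)]
    rw [Finset.sum_congr rfl h2, Finset.sum_comm]
    refine Finset.sum_congr rfl fun Ψ hΨ => ?_
    rw [PrPsi, Finset.sum_mul]
    refine Finset.sum_congr rfl fun A hA => ?_
    by_cases h : Psi src tgt m S i A = Ψ
    · rw [if_pos h, if_pos h, prL]
    · rw [if_neg h, if_neg h, zero_mul]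


end
end

section
/- Reachability is compatible with transitive-closure contraction on a frontier: let G* be the directed graph on W_i ∪ {S, v} with an edge (u,w) whenever u reaches w in (V,E'). Then for all u ∈ (W_i \ W_i^{S⇝}(E')) ∪ {S} and w ∈ (W_i \ W_i^{⇝v}(E')) ∪ {v}, u reaches w in (V,E') if and only if u reaches w in G*. -/
open scoped Classical
open Finset

noncomputable section

/-- The contracted graph `G*` on `W_i ∪ {S, v}` whose arcs record reachability in
`(V, E')`; `S` is a single extra node. -/
def gstar {V : Type*} (src tgt : ℕ → V) (m i : ℕ) (E' : Finset ℕ) (S : Finset V)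
    (v : V) : (V ⊕ Unit) → (V ⊕ Unit) → Prop
  | Sum.inl u, Sum.inl w =>
      (u ∈ frontSet src tgt m i ∨ u = v) ∧ (w ∈ frontSet src tgt m i ∨ w = v) ∧
      Reach src tgt E' u w
  | Sum.inr _, Sum.inl w =>
      (w ∈ frontSet src tgt m i ∨ w = v) ∧ SReach src tgt E' S w
  | _, Sum.inr _ => False

/-- Reachability is compatible with transitive-closure contraction on the frontier:
for rows `u ∈ (W_i \ W_i^{S⇝}(E')) ∪ {S}` and columns `w ∈ (W_i \ W_i^{⇝v}(E')) ∪ {v}`,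
`u` reaches `w` in `(V, E')` iff `u` reaches `w` in `G*`. -/
theorem stmt12 {V : Type*} (src tgt : ℕ → V) (m i : ℕ) (him : i ≤ m)
    (E' : Finset ℕ) (hE' : E' ⊆ Finset.range i) (S : Finset V) (v : V) :
    (∀ u, u ∈ frontSet src tgt m i → ¬ SReach src tgt E' S u →
      ∀ w, ((w ∈ frontSet src tgt m i ∧ ¬ Reach src tgt E' w v) ∨ w = v) →
        (Reach src tgt E' u w ↔
          Relation.ReflTransGen (gstar src tgt m i E' S v) (Sum.inl u) (Sum.inl w))) ∧
    (∀ w, ((w ∈ frontSet src tgt m i ∧ ¬ Reach src tgt E' w v) ∨ w = v) →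
        (SReach src tgt E' S w ↔
          Relation.ReflTransGen (gstar src tgt m i E' S v) (Sum.inr ()) (Sum.inl w))) := by
  have key : ∀ (a : V) (x : V ⊕ Unit),
      Relation.ReflTransGen (gstar src tgt m i E' S v) (Sum.inl a) x →
      ∃ b, x = Sum.inl b ∧ Reach src tgt E' a b := by
    intro a x h
    induction h with
    | refl => exact ⟨a, rfl, Relation.ReflTransGen.refl⟩
    | tail h step ih =>
      obtain ⟨b, rfl, hab⟩ := ih
      rename_i c
      cases c with
      | inl c => exact ⟨c, rfl, hab.trans step.2.2⟩
      | inr c => exact step.elim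
  have keyS : ∀ (x : V ⊕ Unit),
      Relation.ReflTransGen (gstar src tgt m i E' S v) (Sum.inr ()) x →
      x = Sum.inr () ∨ ∃ b, x = Sum.inl b ∧ SReach src tgt E' S b := by
    intro x h
    induction h with
    | refl => exact Or.inl rfl
    | tail h step ih =>
      rename_i c
      rcases ih with rfl | ⟨b, rfl, hb⟩
      · cases c with
        | inl c => exact Or.inr ⟨c, rfl, step.2⟩
        | inr c => exact step.elim
      · cases c with
        | inl c =>
            obtain ⟨s, hs, hsb⟩ := hb
            exact Or.inr ⟨c, rfl, s, hs, hsb.trans step.2.2⟩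
        | inr c => exact step.elim
  constructor
  · intro u hu _hnS w hw
    constructor
    · intro hr
      refine Relation.ReflTransGen.single ?_
      exact ⟨Or.inl hu, hw.elim (fun h => Or.inl h.1) Or.inr, hr⟩
    · intro h
      obtain ⟨b, hb, hr⟩ := key u _ h
      cases hb; exact hr
  · intro w hw
    constructor
    · intro hs
      refine Relation.ReflTransGen.single ?_
      exact ⟨hw.elim (fun h => Or.inl h.1) Or.inr, hs⟩
    · intro h
      rcases keyS _ h with hc | ⟨b, hb, hs⟩
      · exact absurd hc (by simp)
      · cases hb; exact hs

end
end
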